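/- arXiv:2201.00257 — 5 statements merged into one kernel-verified Lean document; each statement's English description precedes it below -/
import Mathlib

section
/- Every social path of odd length 2n+1 on [N] passes through at most n+1 colors; that is, if i : {1,…,2n+2} → {1,…,N} satisfies i(1)=i(2n+2) and every edge {i(k),i(k+1)} (as an unordered pair) occurs at at least two indices k ∈ {1,…,2n+1}, then the range of i has cardinality at most n+1. -/
open MeasureTheory ProbabilityTheory Matrix Filter

attribute [local instance] Classical.propDecidable

noncomputable section

/-- A *pattern* is a subset of the unit square `[0,1]²` whose topological
boundary has two-dimensional Lebesgue measure zero. -/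
def IsPattern (S : Set (ℝ × ℝ)) : Prop :=
  S ⊆ Set.Icc (0 : ℝ) 1 ×ˢ Set.Icc (0 : ℝ) 1 ∧ MeasureTheory.volume (frontier S) = 0

/-- Entry `(i, j)` (here `i j : Fin N` are the 0-based versions of the 1-based
matrix indices) of the `N × N` approximating matrix of the pattern `S` is *active*:
the open square `((j-1)/N, j/N) × ((N-i)/N, (N-i+1)/N)` (in 1-based indexing)
has intersection with `S` with nonempty interior. -/
def entryActive (S : Set (ℝ × ℝ)) (N : ℕ) (i j : Fin N) : Prop :=
  (interior (Set.Ioo (((j : ℕ) : ℝ) / N) ((((j : ℕ) : ℝ) + 1) / N) ×ˢ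
      Set.Ioo (((N : ℝ) - ((i : ℕ) : ℝ) - 1) / N) (((N : ℝ) - ((i : ℕ) : ℝ)) / N) ∩ S)).Nonempty

/-- The `N × N` approximating matrix of a pattern `S`, built from the family
`X` of random variables on `Ω`: the `(i,j)` entry is `X i j / √N` if the entry
is active and `0` otherwise. -/
def approxMatrix {Ω : Type*} (S : Set (ℝ × ℝ)) (X : ℕ → ℕ → Ω → ℝ) (N : ℕ) (ω : Ω) :
    Matrix (Fin N) (Fin N) ℝ :=
  Matrix.of fun i j =>
    if entryActive S N i j then X (i : ℕ) (j : ℕ) ω / Real.sqrt N else 0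

/-- A configuration of length `m` is a function `C : Fin m → Bool`, where
`C k = true` means the `k`-th letter is the starred letter `x*` and
`C k = false` means it is `x`.  `configProd C A` is the word `A^C`: the product
of `m` matrices whose `k`-th factor is `A` if `C k = false` and `Aᵀ` if `C k = true`. -/
def configProd {N m : ℕ} (C : Fin m → Bool) (A : Matrix (Fin N) (Fin N) ℝ) :
    Matrix (Fin N) (Fin N) ℝ :=
  (List.ofFn fun k => if C k then Aᵀ else A).prod

/-- The normalized trace `tr(A) = Tr(A)/N` of an `N × N` matrix. -/
def ntr {N : ℕ} (A : Matrix (Fin N) (Fin N) ℝ) : ℝ := A.trace / N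

/-- The family `X` consists of iid real random variables with mean `0`,
variance `1` and finite moments of all orders. -/
structure IIDEntries {Ω : Type*} [MeasurableSpace Ω] (μ : Measure Ω)
    (X : ℕ → ℕ → Ω → ℝ) : Prop where
  meas : ∀ a b, Measurable (X a b)
  indep : iIndepFun (fun p : ℕ × ℕ => X p.1 p.2) μ
  ident : ∀ a b, IdentDistrib (X a b) (X 0 0) μ μ
  mean_zero : ∫ ω, X 0 0 ω ∂μ = 0
  var_one : ∫ ω, (X 0 0 ω) ^ 2 ∂μ = 1
  moments : ∀ p : ℕ, Integrable (fun ω => (X 0 0 ω) ^ p) μ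

/-- A path `i : {1,…,m+1} → {1,…,N}` (0-indexed here) is closed if `i 1 = i (m+1)`. -/
def IsClosedPath {m N : ℕ} (i : Fin (m + 1) → Fin N) : Prop :=
  i 0 = i (Fin.last m)

/-- The `k`-th edge of a path, as an unordered pair. -/
def pathEdge {m N : ℕ} (i : Fin (m + 1) → Fin N) (k : Fin m) : Sym2 (Fin N) :=
  s(i k.castSucc, i k.succ)

/-- The number of indices at which the `k`-th edge of the path occurs. -/
def edgeCount {m N : ℕ} (i : Fin (m + 1) → Fin N) (k : Fin m) : ℕ :=
  (Finset.univ.filter fun l => pathEdge i l = pathEdge i k).card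

/-- A path is *social* if every edge, as an unordered pair, occurs at at least
two indices. -/
def Social {m N : ℕ} (i : Fin (m + 1) → Fin N) : Prop :=
  ∀ k, 2 ≤ edgeCount i k

/-- A path is *strictly paired* if every edge, as an unordered pair, occurs at
exactly two indices. -/
def StrictlyPaired {m N : ℕ} (i : Fin (m + 1) → Fin N) : Prop :=
  ∀ k, edgeCount i k = 2

/-- The number of colors a path passes through: the cardinality of its range. -/
def colors {m N : ℕ} (i : Fin (m + 1) → Fin N) : ℕ :=
  (Finset.univ.image i).card

/-- A path is *strictly polar paired* with respect to the configuration `C` if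
it is strictly paired and in each pair of equal edges one occurrence is starred
and the other unstarred. -/
def PolarPaired {m N : ℕ} (C : Fin m → Bool) (i : Fin (m + 1) → Fin N) : Prop :=
  StrictlyPaired i ∧ ∀ k l, k ≠ l → pathEdge i k = pathEdge i l → C k ≠ C l

/-- The constraints defining the path counting function: `i` is a closed path of
length `2n` on `[n+1]`, strictly polar paired w.r.t. `C`, passing through `n+1`
colors, and for each `k`: `(x (i k), x (i (k+1))) ∈ S` if `C k = x`, and
`(x (i (k+1)), x (i k)) ∈ S` if `C k = x*`. -/
def pathSatisfies (S : Set (ℝ × ℝ)) {n : ℕ} (C : Fin (2 * n) → Bool)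
    (x : Fin (n + 1) → ℝ) (i : Fin (2 * n + 1) → Fin (n + 1)) : Prop :=
  IsClosedPath i ∧ PolarPaired C i ∧ colors i = n + 1 ∧
    ∀ k : Fin (2 * n),
      if C k then (x (i k.succ), x (i k.castSucc)) ∈ S
      else (x (i k.castSucc), x (i k.succ)) ∈ S

/-- The path counting function `f_{S,C}^{n+1}`. -/
def pathCount (S : Set (ℝ × ℝ)) {n : ℕ} (C : Fin (2 * n) → Bool)
    (x : Fin (n + 1) → ℝ) : ℕ :=
  if Function.Injective x then
    (Finset.univ.filter fun i : Fin (2 * n + 1) → Fin (n + 1) => pathSatisfies S C x i).card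
  else 0

/-!
A walk that visits `c` vertices uses at least `c - 1` distinct edges, since each vertex reached
for the first time is reached through an edge that has not occurred before. In a social walk of
length `m` every distinct edge occupies at least two of the `m` steps, so there are at most
`m / 2` of them; for `m = 2n + 1` this leaves at most `n + 1` colors.
-/

theorem Fin.image_univ_eq_insert_last {m : ℕ} {α : Type*} [DecidableEq α]
    (f : Fin (m + 1) → α) :
    Finset.univ.image f = insert (f (Fin.last m)) (Finset.univ.image (Fin.init f)) := by
  rw [Fin.univ_castSuccEmb, Finset.cons_eq_insert, Finset.image_insert, Finset.map_eq_image,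
    Finset.image_image]
  rfl

namespace SocialPath

variable {m N : ℕ}

def edges (i : Fin (m + 1) → Fin N) : Finset (Sym2 (Fin N)) :=
  Finset.univ.image (pathEdge i)

theorem two_mul_card_edges_le {i : Fin (m + 1) → Fin N} (hsocial : Social i) :
    2 * (edges i).card ≤ m := by
  simpa [edges] using Finset.mul_card_image_le_card (f := pathEdge i) Finset.univ 2 fun e he => by
    obtain ⟨k, -, rfl⟩ := Finset.mem_image.mp he
    exact hsocial k

theorem mem_image_of_mem_edges {i : Fin (m + 1) → Fin N} {e : Sym2 (Fin N)} {v : Fin N}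
    (he : e ∈ edges i) (hv : v ∈ e) : v ∈ Finset.univ.image i := by
  obtain ⟨k, -, rfl⟩ := Finset.mem_image.mp he
  rcases Sym2.mem_iff.mp hv with rfl | rfl <;> exact Finset.mem_image_of_mem _ (Finset.mem_univ _)

theorem edges_eq_insert_last (i : Fin (m + 2) → Fin N) :
    edges i = insert s(i (Fin.last m).castSucc, i (Fin.last (m + 1))) (edges (Fin.init i)) := by
  rw [edges, Fin.image_univ_eq_insert_last]
  rfl

theorem colors_le_card_edges_add_one : ∀ {m : ℕ} (i : Fin (m + 1) → Fin N),
    colors i ≤ (edges i).card + 1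
  | 0, i => by simp [colors]
  | m + 1, i => by
    have ih := colors_le_card_edges_add_one (Fin.init i)
    rw [colors] at ih ⊢
    rw [Fin.image_univ_eq_insert_last i, edges_eq_insert_last]
    by_cases hnew : i (Fin.last (m + 1)) ∈ Finset.univ.image (Fin.init i)
    · rw [Finset.insert_eq_of_mem hnew]
      exact ih.trans (by gcongr; exact Finset.subset_insert _ _)
    · have hfresh : s(i (Fin.last m).castSucc, i (Fin.last (m + 1))) ∉ edges (Fin.init i) :=
        fun he => hnew (mem_image_of_mem_edges he (Sym2.mem_mk_right _ _))
      rw [Finset.card_insert_of_notMem hnew, Finset.card_insert_of_notMem hfresh]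
      omega

end SocialPath

theorem social_path_odd_length_colors_le_general {n N : ℕ}
    (i : Fin (2 * n + 1 + 1) → Fin N)
    (hsocial : Social i) :
    colors i ≤ n + 1 := by
  have hedges := SocialPath.two_mul_card_edges_le hsocial
  have hcolors := SocialPath.colors_le_card_edges_add_one i
  omega

/-- Every social (closed) path of odd length `2n+1` on `[N]` passes through at
most `n+1` colors. -/
theorem social_path_odd_length_colors_le {n N : ℕ}
    (i : Fin (2 * n + 1 + 1) → Fin N) (hclosed : IsClosedPath i)
    (hsocial : Social i) :
    colors i ≤ n + 1 :=
  social_path_odd_length_colors_le_general i hsocial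
end
end

section
/- Every social path of even length 2n on [N] passes through at most n+1 colors; that is, if i : {1,…,2n+1} → {1,…,N} satisfies i(1)=i(2n+1) and every edge {i(k),i(k+1)} (as an unordered pair) occurs at at least two indices k ∈ {1,…,2n}, then the range of i has cardinality at most n+1. -/
open MeasureTheory ProbabilityTheory Matrix Filter

attribute [local instance] Classical.propDecidable

noncomputable section

/-! Each step of a walk either revisits a vertex or reaches a new vertex along an edge that cannot
have occurred before, so a walk with `E` distinct edges visits at most `E + 1` vertices. In a
social walk of length `2n` each edge is used at least twice, hence `E ≤ n`. -/

open Finset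

lemma two_mul_card_image_pathEdge_le {m N : ℕ} {i : Fin (m + 1) → Fin N} (hsocial : Social i) :
    2 * #(univ.image (pathEdge i)) ≤ m := by
  simpa using mul_card_image_le_card (f := pathEdge i) univ 2 fun e he => by
    obtain ⟨k, -, rfl⟩ := mem_image.1 he
    exact hsocial k

lemma image_univ_fin_succ {α : Type*} [DecidableEq α] {m : ℕ} (f : Fin (m + 1) → α) :
    univ.image f = insert (f (Fin.last m)) (univ.image (Fin.init f)) := by
  ext a
  simp [Fin.exists_fin_succ', Fin.init, or_comm, eq_comm]

lemma init_pathEdge {m N : ℕ} (i : Fin (m + 2) → Fin N) :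
    Fin.init (pathEdge i) = pathEdge (Fin.init i) :=
  rfl

theorem colors_le_card_image_pathEdge_add_one :
    ∀ {m N : ℕ} (i : Fin (m + 1) → Fin N), colors i ≤ #(univ.image (pathEdge i)) + 1
  | 0, _, i => by
    simp [colors]
  | m + 1, _, i => by
    have ih := colors_le_card_image_pathEdge_add_one (Fin.init i)
    rw [colors] at ih
    rw [colors, image_univ_fin_succ i, image_univ_fin_succ (pathEdge i), init_pathEdge]
    by_cases hvisited : i (Fin.last (m + 1)) ∈ univ.image (Fin.init i)
    · rw [insert_eq_of_mem hvisited]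
      exact ih.trans (by grw [card_le_card (subset_insert _ _)])
    · have hnew : pathEdge i (Fin.last m) ∉ univ.image (pathEdge (Fin.init i)) := by
        intro hmem
        obtain ⟨k, -, hk⟩ := mem_image.1 hmem
        have hlast : i (Fin.last (m + 1)) ∈ pathEdge (Fin.init i) k := by
          rw [hk]; exact Sym2.mem_mk_right _ _
        rcases Sym2.mem_iff.1 hlast with h | h <;>
          exact hvisited (mem_image.2 ⟨_, mem_univ _, h.symm⟩)
      rw [card_insert_of_notMem hvisited, card_insert_of_notMem hnew]
      omega

theorem social_path_even_length_colors_le_general {n N : ℕ}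
    (i : Fin (2 * n + 1) → Fin N)
    (hsocial : Social i) :
    colors i ≤ n + 1 := by
  have hedges := two_mul_card_image_pathEdge_le hsocial
  have hcolors := colors_le_card_image_pathEdge_add_one i
  omega

/-- Every social (closed) path of even length `2n` on `[N]` passes through at
most `n+1` colors. -/
theorem social_path_even_length_colors_le {n N : ℕ}
    (i : Fin (2 * n + 1) → Fin N) (hclosed : IsClosedPath i)
    (hsocial : Social i) :
    colors i ≤ n + 1 :=
  social_path_even_length_colors_le_general i hsocial
end
end

section
/- Let {X_{ab}} be a family of iid real random variables with mean 0 and finite moments of all orders, let C be a configuration of length m, and let i be a path of length m on [N] that is not social, i.e. some edge {i(k),i(k+1)}, as an unordered pair, occurs at exactly one index k. Then E[∏_{k=1}^{m} X^{C(k)}_{i(k),i(k+1)}] = 0. -/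
open MeasureTheory ProbabilityTheory Matrix Filter

attribute [local instance] Classical.propDecidable

noncomputable section

/-
Group the factors by the ordered pair of indices of the variable they read: the product becomes
`∏ p, Y p ^ n p` over distinct pairs `p`, with `n p` the multiplicity. The edge that occurs only
once contributes a pair `p₀` with `n p₀ = 1`, and `Y p₀` is independent of the product of the
remaining (distinct, hence independent) factors, so the expectation factors through `E[Y p₀] = 0`.
-/

section Independence

variable {Ω κ : Type*} [MeasurableSpace Ω] {μ : Measure Ω} {Y : κ → Ω → ℝ}

theorem integral_prod_pow_eq_zero_of_pow_eq_one (hindep : iIndepFun Y μ)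
    (hmeas : ∀ p, Measurable (Y p)) (n : κ → ℕ) {T : Finset κ} {p₀ : κ} (hp₀ : p₀ ∈ T)
    (hn : n p₀ = 1) (hmean : ∫ ω, Y p₀ ω ∂μ = 0) :
    ∫ ω, ∏ p ∈ T, Y p ω ^ n p ∂μ = 0 := by
  set Z : κ → Ω → ℝ := fun p ω => Y p ω ^ n p
  have hZmeas : ∀ p, Measurable (Z p) := fun p => (hmeas p).pow_const (n p)
  have hZindep : iIndepFun Z μ :=
    hindep.comp (fun p x => x ^ n p) fun p => measurable_id.pow_const (n p)
  have hsplit : (fun ω => ∏ p ∈ T, Y p ω ^ n p) = (∏ p ∈ T.erase p₀, Z p) * Z p₀ := by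
    ext ω
    simp only [Pi.mul_apply, Finset.prod_apply, Finset.prod_erase_mul T _ hp₀, Z]
  have hZp₀ : Z p₀ = Y p₀ := by simp only [Z, hn, pow_one]
  have hindep₀ : IndepFun (∏ p ∈ T.erase p₀, Z p) (Z p₀) μ :=
    hZindep.indepFun_finsetProd_of_notMem hZmeas (T.notMem_erase p₀)
  rw [hsplit, hindep₀.integral_mul_eq_mul_integral
    (by fun_prop : Measurable (∏ p ∈ T.erase p₀, Z p)).aestronglyMeasurable
    (hZmeas p₀).aestronglyMeasurable, hZp₀, hmean, mul_zero]

theorem integral_prod_comp_eq_zero_of_fiber_eq_singleton {ι : Type*} (hindep : iIndepFun Y μ)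
    (hmeas : ∀ p, Measurable (Y p)) (g : ι → κ) {s : Finset ι} {k₀ : ι} (hk₀ : k₀ ∈ s)
    (hfiber : ∀ k ∈ s, g k = g k₀ → k = k₀) (hmean : ∫ ω, Y (g k₀) ω ∂μ = 0) :
    ∫ ω, ∏ k ∈ s, Y (g k) ω ∂μ = 0 := by
  have hcount : (s.filter fun k => g k = g k₀).card = 1 := by
    rw [Finset.card_eq_one]
    exact ⟨k₀, Finset.eq_singleton_iff_unique_mem.mpr
      ⟨Finset.mem_filter.mpr ⟨hk₀, rfl⟩, fun k hk => hfiber k (Finset.mem_filter.mp hk).1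
        (Finset.mem_filter.mp hk).2⟩⟩
  rw [funext fun ω => Finset.prod_comp (fun p => Y p ω) g]
  exact integral_prod_pow_eq_zero_of_pow_eq_one hindep hmeas _
    (Finset.mem_image_of_mem g hk₀) hcount hmean

end Independence

section Paths

variable {m N : ℕ}

def orientedEdge (C : Fin m → Bool) (i : Fin (m + 1) → Fin N) (k : Fin m) : ℕ × ℕ :=
  if C k then ((i k.succ).val, (i k.castSucc).val) else ((i k.castSucc).val, (i k.succ).val)

theorem pathEdge_eq_of_orientedEdge_eq {C : Fin m → Bool} {i : Fin (m + 1) → Fin N}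
    {k l : Fin m} (h : orientedEdge C i k = orientedEdge C i l) : pathEdge i k = pathEdge i l := by
  unfold orientedEdge at h
  unfold pathEdge
  split_ifs at h <;> simp only [Prod.mk.injEq, Fin.val_inj] at h <;>
    simp only [h, Sym2.eq_swap]

theorem eq_of_pathEdge_eq_of_edgeCount_eq_one {i : Fin (m + 1) → Fin N} {k₀ : Fin m}
    (h : edgeCount i k₀ = 1) {l : Fin m} (hl : pathEdge i l = pathEdge i k₀) : l = k₀ := by
  obtain ⟨a, ha⟩ := Finset.card_eq_one.mp h
  have mem : ∀ k, pathEdge i k = pathEdge i k₀ → k = a := fun k hk =>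
    Finset.mem_singleton.mp (ha ▸ Finset.mem_filter.mpr ⟨Finset.mem_univ k, hk⟩)
  exact (mem l hl).trans (mem k₀ rfl).symm

end Paths

theorem nonsocial_path_mean_zero_general {m N : ℕ}
    {Ω : Type} [MeasurableSpace Ω] (μ : Measure Ω)
    (X : ℕ → ℕ → Ω → ℝ)
    (hmeas : ∀ a b, Measurable (X a b))
    (hindep : iIndepFun
      (fun p : ℕ × ℕ => X p.1 p.2) μ)
    (hident : ∀ a b, IdentDistrib (X a b) (X 0 0) μ μ)
    (hmean : ∫ ω, X 0 0 ω ∂μ = 0)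
    (C : Fin m → Bool) (i : Fin (m + 1) → Fin N)
    (hnonsocial : ∃ k : Fin m, edgeCount i k = 1) :
    (∫ ω, ∏ k : Fin m,
        (if C k then X (i k.succ).val (i k.castSucc).val ω
         else X (i k.castSucc).val (i k.succ).val ω) ∂μ) = 0 := by
  obtain ⟨k₀, hk₀⟩ := hnonsocial
  have hintegrand : ∀ ω, (∏ k : Fin m,
      (if C k then X (i k.succ).val (i k.castSucc).val ω
       else X (i k.castSucc).val (i k.succ).val ω)) =
      ∏ k : Fin m, X (orientedEdge C i k).1 (orientedEdge C i k).2 ω := fun ω =>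
    Finset.prod_congr rfl fun k _ => by unfold orientedEdge; split_ifs <;> rfl
  simp_rw [hintegrand]
  refine integral_prod_comp_eq_zero_of_fiber_eq_singleton (Y := fun p : ℕ × ℕ => X p.1 p.2)
    hindep (fun p => hmeas p.1 p.2) (orientedEdge C i) (Finset.mem_univ k₀)
    (fun _ _ hk => eq_of_pathEdge_eq_of_edgeCount_eq_one hk₀ (pathEdge_eq_of_orientedEdge_eq hk))
    ?_
  rw [(hident _ _).integral_eq, hmean]

/-- Let `{X a b}` be iid real random variables with mean `0` and finite moments
of all orders, `C` a configuration of length `m`, and `i` a closed path of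
length `m` on `[N]` that is not social, i.e. some edge occurs at exactly one
index.  Then `E[∏_k X^{C k}_{i k, i (k+1)}] = 0`. -/
theorem nonsocial_path_mean_zero {m N : ℕ}
    {Ω : Type} [MeasurableSpace Ω] (μ : Measure Ω) [IsProbabilityMeasure μ]
    (X : ℕ → ℕ → Ω → ℝ)
    (hmeas : ∀ a b, Measurable (X a b))
    (hindep : iIndepFun
      (fun p : ℕ × ℕ => X p.1 p.2) μ)
    (hident : ∀ a b, IdentDistrib (X a b) (X 0 0) μ μ)
    (hmean : ∫ ω, X 0 0 ω ∂μ = 0)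
    (hmom : ∀ p : ℕ, Integrable (fun ω => (X 0 0 ω) ^ p) μ)
    (C : Fin m → Bool) (i : Fin (m + 1) → Fin N)
    (hclosed : IsClosedPath i)
    (hnonsocial : ∃ k : Fin m, edgeCount i k = 1) :
    (∫ ω, ∏ k : Fin m,
        (if C k then X (i k.succ).val (i k.castSucc).val ω
         else X (i k.castSucc).val (i k.succ).val ω) ∂μ) = 0 :=
  nonsocial_path_mean_zero_general μ X hmeas hindep hident hmean C i hnonsocial
end
end

section
/- Let C be a configuration of length 2n and let N ≥ n+1. For an index k ∈ {1,…,2n+1} and a color s ∈ {1,…,N}, let P(k,s) be the number of paths i of length 2n on [N] that are strictly polar paired with respect to C, pass through n+1 colors, and satisfy i(k)=s. Then P(k_1,s_1) = P(k_2,s_2) for all indices k_1,k_2 and colors s_1,s_2, and N · P(k,s) equals the total number of paths of length 2n on [N] that are strictly polar paired with respect to C and pass through n+1 colors. -/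
open MeasureTheory ProbabilityTheory Matrix Filter

attribute [local instance] Classical.propDecidable

noncomputable section

/-- `P k s`: the number of closed paths of length `2n` on `[N]` that are
strictly polar paired with respect to `C`, pass through `n+1` colors, and take
the value `s` at the index `k`. -/
def polarConstraintPathCountAt (n N : ℕ) (C : Fin (2 * n) → Bool)
    (k : Fin (2 * n + 1)) (s : Fin N) : ℕ :=
  (Finset.univ.filter fun i : Fin (2 * n + 1) → Fin N =>
    IsClosedPath i ∧ PolarPaired C i ∧ colors i = n + 1 ∧ i k = s).card

/-- The total number of closed paths of length `2n` on `[N]` that are strictly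
polar paired with respect to `C` and pass through `n+1` colors. -/
def polarConstraintPathCount (n N : ℕ) (C : Fin (2 * n) → Bool) : ℕ :=
  (Finset.univ.filter fun i : Fin (2 * n + 1) → Fin N =>
    IsClosedPath i ∧ PolarPaired C i ∧ colors i = n + 1).card

/-!
Relabelling the colors by a permutation of `[N]` preserves closedness, strict polar pairing
and the number of colors, so the transposition `(s₁ s₂)` maps the paths with `i k = s₁`
bijectively onto those with `i k = s₂`. Hence the `N` fibres of `i ↦ i k` are equinumerous,
and since they partition all the paths, each of them holds exactly a `1/N` share.
-/

open Finset

section PermInvariantFamily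

variable {ι α : Type*} [DecidableEq α]

theorem card_filter_apply_le_of_comp_mem {s : Finset (ι → α)}
    (hs : ∀ σ : Equiv.Perm α, ∀ i ∈ s, σ ∘ i ∈ s) (k : ι) (a b : α) :
    #{i ∈ s | i k = a} ≤ #{i ∈ s | i k = b} := by
  refine card_le_card_of_injOn (fun i => Equiv.swap a b ∘ i) (fun i hi => ?_)
    fun i _ j _ hij => (Equiv.swap a b).injective.comp_left hij
  obtain ⟨his, hik⟩ := mem_filter.1 (mem_coe.1 hi)
  exact mem_filter.2 ⟨hs _ i his, by simp [hik]⟩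

theorem card_filter_apply_eq_of_comp_mem {s : Finset (ι → α)}
    (hs : ∀ σ : Equiv.Perm α, ∀ i ∈ s, σ ∘ i ∈ s) (k : ι) (a b : α) :
    #{i ∈ s | i k = a} = #{i ∈ s | i k = b} :=
  le_antisymm (card_filter_apply_le_of_comp_mem hs k a b)
    (card_filter_apply_le_of_comp_mem hs k b a)

theorem card_mul_card_filter_apply_of_comp_mem [Fintype α] {s : Finset (ι → α)}
    (hs : ∀ σ : Equiv.Perm α, ∀ i ∈ s, σ ∘ i ∈ s) (k : ι) (a : α) :
    Fintype.card α * #{i ∈ s | i k = a} = #s := by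
  rw [card_eq_sum_card_fiberwise (s := s) (f := fun i => i k) (t := univ) fun _ _ => mem_univ _,
    sum_congr rfl fun b _ => card_filter_apply_eq_of_comp_mem hs k b a, sum_const, card_univ,
    smul_eq_mul]

end PermInvariantFamily

section Relabel

variable {m N M : ℕ} {f : Fin N → Fin M}

theorem isClosedPath_comp_iff (hf : Function.Injective f) (i : Fin (m + 1) → Fin N) :
    IsClosedPath (f ∘ i) ↔ IsClosedPath i :=
  hf.eq_iff

theorem pathEdge_comp_eq_iff (hf : Function.Injective f) (i : Fin (m + 1) → Fin N)
    (k l : Fin m) :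
    pathEdge (f ∘ i) k = pathEdge (f ∘ i) l ↔ pathEdge i k = pathEdge i l :=
  show Sym2.map f (pathEdge i k) = Sym2.map f (pathEdge i l) ↔ _ from
    (Sym2.map.injective hf).eq_iff

theorem edgeCount_comp (hf : Function.Injective f) (i : Fin (m + 1) → Fin N) (k : Fin m) :
    edgeCount (f ∘ i) k = edgeCount i k := by
  simp only [edgeCount, pathEdge_comp_eq_iff hf i]

theorem polarPaired_comp_iff (hf : Function.Injective f) (i : Fin (m + 1) → Fin N)
    (C : Fin m → Bool) :
    PolarPaired C (f ∘ i) ↔ PolarPaired C i := by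
  simp only [PolarPaired, StrictlyPaired, edgeCount_comp hf i, pathEdge_comp_eq_iff hf i]

theorem colors_comp (hf : Function.Injective f) (i : Fin (m + 1) → Fin N) :
    colors (f ∘ i) = colors i := by
  rw [colors, ← image_image, card_image_of_injective _ hf, colors]

end Relabel

theorem polarConstraintPathCountAt_const_general {n N : ℕ} (C : Fin (2 * n) → Bool) :
    (∀ (k₁ k₂ : Fin (2 * n + 1)) (s₁ s₂ : Fin N),
      polarConstraintPathCountAt n N C k₁ s₁ = polarConstraintPathCountAt n N C k₂ s₂) ∧
    (∀ (k : Fin (2 * n + 1)) (s : Fin N),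
      N * polarConstraintPathCountAt n N C k s = polarConstraintPathCount n N C) := by
  set s := univ.filter fun i : Fin (2 * n + 1) → Fin N =>
    IsClosedPath i ∧ PolarPaired C i ∧ colors i = n + 1
  have hs : ∀ σ : Equiv.Perm (Fin N), ∀ i ∈ s, σ ∘ i ∈ s := fun σ i => by
    simp only [s, mem_filter, mem_univ, true_and, isClosedPath_comp_iff σ.injective,
      polarPaired_comp_iff σ.injective, colors_comp σ.injective, imp_self]
  have hmul : ∀ k a,
      N * polarConstraintPathCountAt n N C k a = polarConstraintPathCount n N C := by
    intro k a
    have hP : polarConstraintPathCountAt n N C k a = #{i ∈ s | i k = a} := by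
      simp only [polarConstraintPathCountAt, s, filter_filter, and_assoc]
    rw [hP, show polarConstraintPathCount n N C = #s from rfl,
      ← card_mul_card_filter_apply_of_comp_mem hs k a, Fintype.card_fin]
  exact ⟨fun k₁ k₂ s₁ s₂ =>
    Nat.eq_of_mul_eq_mul_left s₁.pos ((hmul k₁ s₁).trans (hmul k₂ s₂).symm), hmul⟩

/-- For `N ≥ n+1`, the count `P k s` of strictly polar paired closed paths of
length `2n` on `[N]` with `n+1` colors and `i k = s` does not depend on `k` or
`s`, and `N · P k s` equals the total number of such paths. -/
theorem polarConstraintPathCountAt_const {n N : ℕ} (hN : n + 1 ≤ N)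
    (C : Fin (2 * n) → Bool) :
    (∀ (k₁ k₂ : Fin (2 * n + 1)) (s₁ s₂ : Fin N),
      polarConstraintPathCountAt n N C k₁ s₁ = polarConstraintPathCountAt n N C k₂ s₂) ∧
    (∀ (k : Fin (2 * n + 1)) (s : Fin N),
      N * polarConstraintPathCountAt n N C k s = polarConstraintPathCount n N C) :=
  polarConstraintPathCountAt_const_general C
end
end

section
/- There exists a universal constant K such that for every pattern S in [0,1]^2, every n ≥ 1 and every configuration C of length 2n, the normalized integral of the path counting function satisfies (1/(n+1)!) ∫_{[0,1]^{n+1}} f_{S,C}^{n+1}(x_1,…,x_{n+1}) dx ≤ K^{n}. In particular, the asymptotic starred moments of a patterned matrix grow at most exponentially in n and satisfy Carleman's condition. -/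
open MeasureTheory ProbabilityTheory Matrix Filter

attribute [local instance] Classical.propDecidable

noncomputable section

/-!
A strictly paired closed path of length `2n` through `n + 1` colours has only `n` distinct edges
on `n + 1` vertices, so it is a depth-first tour of a spanning tree. Counting shows that a step
to an already visited vertex never opens a new edge, so the edges traversed once so far always
form the chain of a stack of distinct vertices topped by the current one, and such a step must
pop that stack. Hence a path is determined by the times at which it first visits each colour,
an injection of `Fin (n + 1)` into `Fin (2n + 1)`. There are
`(2n+1)!/n! = (n+1)! * choose (2n+1) n ≤ (n+1)! * 4^n` of those, so `f_{S,C}^{n+1} ≤ (n+1)! 4^n`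
pointwise and `K = 4` works.
-/

open Finset

theorem Finset.card_image_range_eq_card_filter_notMem {α : Type*} [DecidableEq α] (f : ℕ → α)
    (k : ℕ) :
    #((range k).image f) = #{j ∈ range k | f j ∉ (range j).image f} := by
  induction k with
  | zero => simp
  | succ k ih =>
    have hk : k ∉ {j ∈ range k | f j ∉ (range j).image f} := by simp
    rw [range_add_one, image_insert, filter_insert]
    by_cases h : f k ∈ (range k).image f
    · rw [insert_eq_of_mem h, if_neg (not_not.mpr h), ih]
    · rw [card_insert_of_notMem h, if_pos h, card_insert_of_notMem hk, ih]

namespace PairedWalk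

variable {V : Type*}

def walkEdge (w : ℕ → V) (j : ℕ) : Sym2 V := s(w j, w (j + 1))

def edgeMult (w : ℕ → V) (k : ℕ) (e : Sym2 V) : ℕ := #{j ∈ range k | walkEdge w j = e}

def firstVisit (w : ℕ → V) (v : V) : ℕ := sInf {j | w j = v}

structure IsPairedCover [Fintype V] (w : ℕ → V) (m : ℕ) : Prop where
  paired : ∀ j < m, edgeMult w m (walkEdge w j) = 2
  cover : ∀ v, ∃ j ≤ m, w j = v
  length_add_two : m + 2 = 2 * Fintype.card V

variable {w w' : ℕ → V} {j k m : ℕ} {e : Sym2 V}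

theorem edgeMult_succ :
    edgeMult w (k + 1) e = edgeMult w k e + if walkEdge w k = e then 1 else 0 := by
  rw [edgeMult, range_add_one, filter_insert]
  split_ifs <;> simp [edgeMult]

theorem edgeMult_mono (h : j ≤ k) : edgeMult w j e ≤ edgeMult w k e :=
  card_le_card (filter_subset_filter _ (range_subset_range.mpr h))

theorem edgeMult_ne_zero_iff : edgeMult w k e ≠ 0 ↔ e ∈ (range k).image (walkEdge w) := by
  simp [edgeMult]

theorem edgeMult_congr (h : ∀ j ≤ k, w j = w' j) : edgeMult w k = edgeMult w' k := by
  ext e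
  refine congrArg card (filter_congr fun j hj => ?_)
  have hj := mem_range.mp hj
  rw [walkEdge, walkEdge, h j (by omega), h (j + 1) (by omega)]

theorem walkEdge_notMem_of_notMem (h : w (j + 1) ∉ (range (j + 1)).image w) :
    walkEdge w j ∉ (range j).image (walkEdge w) := by
  simp only [mem_image, mem_range, not_exists, not_and] at h ⊢
  intro l hl he
  rcases Sym2.eq_iff.mp he with ⟨-, h'⟩ | ⟨h', -⟩
  · exact h (l + 1) (by omega) h'
  · exact h l (by omega) h'

theorem firstVisit_eq_of_notMem (h : w j ∉ (range j).image w) : firstVisit w (w j) = j := by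
  refine le_antisymm (Nat.sInf_le rfl) (not_lt.mp fun hlt => h ?_)
  exact mem_image.mpr ⟨_, mem_range.mpr hlt, Nat.sInf_mem (s := {i | w i = w j}) ⟨j, rfl⟩⟩

def chainEdges : List V → List (Sym2 V)
  | a :: b :: l => s(a, b) :: chainEdges (b :: l)
  | _ => []

theorem mem_of_mem_chainEdges {v : V} : ∀ {l : List V}, e ∈ chainEdges l → v ∈ e → v ∈ l
  | a :: b :: l, he, hv => by
    rcases List.mem_cons.mp he with rfl | he
    · rcases Sym2.mem_iff.mp hv with rfl | rfl <;> simp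
    · exact List.mem_cons_of_mem a (mem_of_mem_chainEdges he hv)
  | [], he, _ | [_], he, _ => by simp [chainEdges] at he

theorem head?_eq_of_mem_chainEdges {a z : V} {l : List V} (hl : (a :: l).Nodup)
    (h : s(a, z) ∈ chainEdges (a :: l)) : l.head? = some z := by
  match l, hl, h with
  | b :: l, hl, h =>
    rcases List.mem_cons.mp h with h | h
    · simp [Sym2.congr_right.mp h]
    · exact absurd (mem_of_mem_chainEdges h (Sym2.mem_mk_left a z)) (List.nodup_cons.mp hl).1
  | [], _, h => simp [chainEdges] at h

structure IsStack (w : ℕ → V) (k : ℕ) (s : List V) : Prop where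
  nodup : s.Nodup
  head?_eq : s.head? = some (w k)
  visited : ∀ v ∈ s, v ∈ (range (k + 1)).image w
  edgeMult_eq_one_iff : ∀ e, edgeMult w k e = 1 ↔ e ∈ chainEdges s

theorem isStack_zero : IsStack w 0 [w 0] where
  nodup := List.nodup_singleton _
  head?_eq := rfl
  visited := by simp
  edgeMult_eq_one_iff := by simp [edgeMult, chainEdges]

theorem IsStack.push {s : List V} (hs : IsStack w k s)
    (hnew : w (k + 1) ∉ (range (k + 1)).image w) :
    IsStack w (k + 1) (w (k + 1) :: s) where
  nodup := List.nodup_cons.mpr ⟨fun h => hnew (hs.visited _ h), hs.nodup⟩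
  head?_eq := rfl
  visited v hv := by
    rcases List.mem_cons.mp hv with rfl | hv
    · exact mem_image_of_mem w (self_mem_range_succ _)
    · exact image_subset_image (range_subset_range.mpr (Nat.le_succ _)) (hs.visited v hv)
  edgeMult_eq_one_iff e := by
    obtain ⟨t, rfl⟩ := List.head?_eq_some_iff.mp hs.head?_eq
    have hzero : edgeMult w k (walkEdge w k) = 0 :=
      not_not.mp (mt edgeMult_ne_zero_iff.mp (walkEdge_notMem_of_notMem hnew))
    rw [edgeMult_succ, chainEdges, List.mem_cons, ← hs.edgeMult_eq_one_iff,
      show s(w (k + 1), w k) = walkEdge w k from Sym2.eq_swap]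
    by_cases he : walkEdge w k = e
    · subst he
      simp [hzero]
    · rw [if_neg he, add_zero, or_iff_right (Ne.symm he)]

section Cover

variable [Fintype V]

theorem IsPairedCover.two_mul_card_edges (hw : IsPairedCover w m) :
    2 * #((range m).image (walkEdge w)) = m := by
  conv_rhs => rw [← card_range m, card_eq_sum_card_image (walkEdge w)]
  rw [mul_comm, ← smul_eq_mul, ← sum_const]
  refine sum_congr rfl fun e he => ?_
  obtain ⟨j, hj, rfl⟩ := mem_image.mp he
  exact (hw.paired j (mem_range.mp hj)).symm

theorem IsPairedCover.card_vertices (hw : IsPairedCover w m) :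
    #((range (m + 1)).image w) = Fintype.card V := by
  rw [← card_univ]
  congr 1
  refine eq_univ_of_forall fun v => ?_
  obtain ⟨j, hj, rfl⟩ := hw.cover v
  exact mem_image_of_mem w (mem_range.mpr (by omega))

/-- Every visit to a new vertex opens a new edge, and there are exactly as many new vertices as
edges, so a step to a visited vertex has to retrace an edge. -/
theorem IsPairedCover.walkEdge_mem_of_revisit (hw : IsPairedCover w m) (hk : k < m)
    (hrev : w (k + 1) ∈ (range (k + 1)).image w) :
    walkEdge w k ∈ (range k).image (walkEdge w) := by
  by_contra hnew
  set newVertex := {j ∈ range (m + 1) | w j ∉ (range j).image w}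
  set newEdge := {j ∈ range m | walkEdge w j ∉ (range j).image (walkEdge w)}
  have hsub : insert k ((newVertex.erase 0).image (· - 1)) ⊆ newEdge := by
    refine insert_subset (mem_filter.mpr ⟨mem_range.mpr hk, hnew⟩) fun j hj => ?_
    obtain ⟨i, hi, rfl⟩ := mem_image.mp hj
    obtain ⟨hi0, hi⟩ := mem_erase.mp hi
    obtain ⟨hi, hnotMem⟩ := mem_filter.mp hi
    obtain ⟨l, rfl⟩ : ∃ l, i = l + 1 := Nat.exists_eq_succ_of_ne_zero hi0
    exact mem_filter.mpr
      ⟨mem_range.mpr (by simp at hi ⊢; omega), walkEdge_notMem_of_notMem hnotMem⟩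
  have hk_notMem : k ∉ (newVertex.erase 0).image (· - 1) := by
    intro hmem
    obtain ⟨i, hi, hik⟩ := mem_image.mp hmem
    obtain ⟨hi0, hi⟩ := mem_erase.mp hi
    obtain rfl : i = k + 1 := by omega
    exact (mem_filter.mp hi).2 hrev
  have hinj : Set.InjOn (· - 1) (newVertex.erase 0 : Set ℕ) := fun a ha b hb hab => by
    simp only [coe_erase, Set.mem_sdiff, Set.mem_singleton_iff] at ha hb
    simp only at hab
    omega
  have hcardVertex : #newVertex = Fintype.card V :=
    (card_image_range_eq_card_filter_notMem w (m + 1)).symm.trans hw.card_vertices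
  have hcardEdge : 2 * #newEdge = m :=
    (congrArg (2 * ·) (card_image_range_eq_card_filter_notMem (walkEdge w) m)).symm.trans
      hw.two_mul_card_edges
  have h0 : 0 ∈ newVertex := by simp [newVertex]
  have := card_le_card hsub
  rw [card_insert_of_notMem hk_notMem, card_image_of_injOn hinj, card_erase_of_mem h0,
    hcardVertex] at this
  have := hw.length_add_two
  omega

theorem IsPairedCover.edgeMult_walkEdge_of_revisit (hw : IsPairedCover w m) (hk : k < m)
    (hrev : w (k + 1) ∈ (range (k + 1)).image w) : edgeMult w k (walkEdge w k) = 1 := by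
  have hpos := edgeMult_ne_zero_iff.mpr (hw.walkEdge_mem_of_revisit hk hrev)
  have hle := edgeMult_mono (w := w) (e := walkEdge w k) (show k + 1 ≤ m from hk)
  rw [edgeMult_succ, if_pos rfl, hw.paired k hk] at hle
  omega


theorem IsStack.pop {s : List V} (hw : IsPairedCover w m) (hk : k < m)
    (hs : IsStack w k s) (hrev : w (k + 1) ∈ (range (k + 1)).image w) :
    ∃ t, s = w k :: w (k + 1) :: t ∧ IsStack w (k + 1) (w (k + 1) :: t) := by
  have hone := hw.edgeMult_walkEdge_of_revisit hk hrev
  obtain ⟨t₀, rfl⟩ := List.head?_eq_some_iff.mp hs.head?_eq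
  have hmem := (hs.edgeMult_eq_one_iff _).mp hone
  obtain ⟨t, rfl⟩ := List.head?_eq_some_iff.mp (head?_eq_of_mem_chainEdges hs.nodup hmem)
  refine ⟨t, rfl, ⟨hs.nodup.of_cons, rfl, fun v hv => ?_, fun e => ?_⟩⟩
  · exact image_subset_image (range_subset_range.mpr (Nat.le_succ _))
      (hs.visited v (List.mem_cons_of_mem _ hv))
  · have hold := hs.edgeMult_eq_one_iff e
    rw [chainEdges, List.mem_cons] at hold
    rw [edgeMult_succ]
    by_cases he : walkEdge w k = e
    · subst he
      have htop : w k ∉ w (k + 1) :: t := (List.nodup_cons.mp hs.nodup).1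
      rw [if_pos rfl, hone]
      exact iff_of_false (by omega) fun h => htop (mem_of_mem_chainEdges h (Sym2.mem_mk_left _ _))
    · rw [if_neg he, add_zero, hold, or_iff_right (Ne.symm he : e ≠ s(w k, w (k + 1)))]

theorem IsPairedCover.exists_isStack (hw : IsPairedCover w m) : ∀ k ≤ m, ∃ s, IsStack w k s
  | 0, _ => ⟨[w 0], isStack_zero⟩
  | k + 1, hk => by
    obtain ⟨s, hs⟩ := hw.exists_isStack k (by omega)
    by_cases hrev : w (k + 1) ∈ (range (k + 1)).image w
    · obtain ⟨t, -, ht⟩ := hs.pop hw hk hrev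
      exact ⟨_, ht⟩
    · exact ⟨_, hs.push hrev⟩

theorem IsPairedCover.eq_of_edgeMult_eq_one (hw : IsPairedCover w m) (hk : k ≤ m) {z z' : V}
    (hz : edgeMult w k s(w k, z) = 1) (hz' : edgeMult w k s(w k, z') = 1) : z = z' := by
  obtain ⟨s, hs⟩ := hw.exists_isStack k hk
  obtain ⟨t, rfl⟩ := List.head?_eq_some_iff.mp hs.head?_eq
  have h := head?_eq_of_mem_chainEdges hs.nodup ((hs.edgeMult_eq_one_iff _).mp hz)
  rwa [head?_eq_of_mem_chainEdges hs.nodup ((hs.edgeMult_eq_one_iff _).mp hz'),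
    Option.some_inj, eq_comm] at h

theorem IsPairedCover.apply_firstVisit (hw : IsPairedCover w m) (v : V) :
    w (firstVisit w v) = v :=
  have ⟨j, _, hj⟩ := hw.cover v
  Nat.sInf_mem (s := {j | w j = v}) ⟨j, hj⟩

theorem IsPairedCover.firstVisit_le (hw : IsPairedCover w m) (v : V) : firstVisit w v ≤ m :=
  have ⟨_, hj, hjv⟩ := hw.cover v
  (Nat.sInf_le hjv).trans hj

theorem IsPairedCover.firstVisit_injective (hw : IsPairedCover w m) :
    Function.Injective (firstVisit w) := fun u v h => by
  rw [← hw.apply_firstVisit u, h, hw.apply_firstVisit v]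

theorem IsPairedCover.apply_eq_of_firstVisit_eq (hw' : IsPairedCover w' m)
    (h : firstVisit w = firstVisit w') (hnew : w j ∉ (range j).image w) : w' j = w j := by
  conv_lhs => rw [← firstVisit_eq_of_notMem hnew, h]
  exact hw'.apply_firstVisit _

/-- A covering walk is determined by its first-visit times: a step to a new vertex is read off
them, and a step back retraces the unique edge at the current vertex traversed once so far. -/
theorem IsPairedCover.eqOn_of_firstVisit_eq (hw : IsPairedCover w m) (hw' : IsPairedCover w' m)
    (h : firstVisit w = firstVisit w') : ∀ k ≤ m, ∀ j ≤ k, w j = w' j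
  | 0, _, j, hj => by
    obtain rfl := Nat.le_zero.mp hj
    exact (hw'.apply_eq_of_firstVisit_eq h (by simp)).symm
  | k + 1, hk, j, hj => by
    have hagree := hw.eqOn_of_firstVisit_eq hw' h k (by omega)
    rcases Nat.lt_or_eq_of_le hj with hj | rfl
    · exact hagree j (by omega)
    by_cases hnew : w (k + 1) ∈ (range (k + 1)).image w
    · by_cases hnew' : w' (k + 1) ∈ (range (k + 1)).image w'
      · have hone := hw.edgeMult_walkEdge_of_revisit hk hnew
        have hone' := hw'.edgeMult_walkEdge_of_revisit hk hnew'
        rw [← edgeMult_congr hagree, walkEdge, ← hagree k le_rfl] at hone'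
        exact hw.eq_of_edgeMult_eq_one (by omega) hone hone'
      · exact hw.apply_eq_of_firstVisit_eq h.symm hnew'
    · exact (hw'.apply_eq_of_firstVisit_eq h hnew).symm

end Cover

end PairedWalk

section Paths

open PairedWalk

variable {m N : ℕ}

def pathWalk {α : Type*} (i : Fin (m + 1) → α) : ℕ → α := fun j => i (Fin.clamp j m)

theorem pathWalk_val {α : Type*} (i : Fin (m + 1) → α) (j : Fin (m + 1)) : pathWalk i j = i j :=
  congrArg i (Fin.ext (min_eq_left (Fin.is_le j)))

theorem walkEdge_pathWalk (i : Fin (m + 1) → Fin N) (k : Fin m) :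
    walkEdge (pathWalk i) k = pathEdge i k := by
  rw [walkEdge, pathEdge, ← pathWalk_val i k.castSucc, ← pathWalk_val i k.succ]
  rfl

theorem edgeMult_pathWalk (i : Fin (m + 1) → Fin N) (k : Fin m) :
    edgeMult (pathWalk i) m (pathEdge i k) = edgeCount i k := by
  rw [edgeMult, edgeCount, ← card_map Fin.valEmbedding]
  congr 1
  ext j
  simp only [mem_filter, mem_range, Finset.mem_map, mem_univ, true_and, Fin.valEmbedding_apply]
  constructor
  · rintro ⟨hj, h⟩
    exact ⟨⟨j, hj⟩, by rwa [← walkEdge_pathWalk], rfl⟩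
  · rintro ⟨l, h, rfl⟩
    exact ⟨l.is_lt, by rwa [walkEdge_pathWalk]⟩

theorem isPairedCover_pathWalk {i : Fin (m + 1) → Fin N} (hm : m + 2 = 2 * N)
    (hi : StrictlyPaired i) (hc : colors i = N) : IsPairedCover (pathWalk i) m where
  paired j hj := by
    rw [walkEdge_pathWalk i ⟨j, hj⟩, edgeMult_pathWalk, hi]
  cover v := by
    have hsurj : univ.image i = univ := eq_univ_of_card _ (hc.trans (Fintype.card_fin N).symm)
    obtain ⟨l, -, rfl⟩ := mem_image.mp (hsurj ▸ mem_univ v)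
    exact ⟨l, Fin.is_le l, pathWalk_val i l⟩
  length_add_two := by rw [Fintype.card_fin, hm]

def firstVisitTimes (i : Fin (m + 1) → Fin N) (v : Fin N) : Fin (m + 1) :=
  Fin.clamp (firstVisit (pathWalk i) v) m

theorem val_firstVisitTimes {i : Fin (m + 1) → Fin N} (hw : IsPairedCover (pathWalk i) m)
    (v : Fin N) : (firstVisitTimes i v : ℕ) = firstVisit (pathWalk i) v :=
  min_eq_left (hw.firstVisit_le v)

theorem card_filter_strictlyPaired_colors_le (hm : m + 2 = 2 * N) :
    #{i : Fin (m + 1) → Fin N | StrictlyPaired i ∧ colors i = N} ≤ (m + 1).descFactorial N := by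
  have hw : ∀ i ∈ ({i | StrictlyPaired i ∧ colors i = N} : Finset (Fin (m + 1) → Fin N)),
      IsPairedCover (pathWalk i) m := fun i hi =>
    isPairedCover_pathWalk hm (mem_filter.mp hi).2.1 (mem_filter.mp hi).2.2
  let embeddings := (univ : Finset (Fin N ↪ Fin (m + 1))).map ⟨_, DFunLike.coe_injective⟩
  calc _ ≤ #embeddings := by
        refine card_le_card_of_injOn firstVisitTimes (fun i hi => ?_) fun i hi i' hi' h => ?_
        · refine mem_map.mpr ⟨⟨firstVisitTimes i, fun u v huv => ?_⟩, mem_univ _, rfl⟩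
          refine (hw i hi).firstVisit_injective ?_
          rw [← val_firstVisitTimes (hw i hi), huv, val_firstVisitTimes (hw i hi)]
        · have hfirst : firstVisit (pathWalk i) = firstVisit (pathWalk i') := funext fun v => by
            rw [← val_firstVisitTimes (hw i hi), ← val_firstVisitTimes (hw i' hi'), h]
          funext l
          rw [← pathWalk_val i, ← pathWalk_val i',
            (hw i hi).eqOn_of_firstVisit_eq (hw i' hi') hfirst m le_rfl l (Fin.is_le l)]
    _ = (m + 1).descFactorial N := by simp [embeddings, Fintype.card_embedding_eq]

end Paths

open Nat in
theorem pathCount_le_factorial_mul_four_pow (S : Set (ℝ × ℝ)) {n : ℕ} (C : Fin (2 * n) → Bool)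
    (x : Fin (n + 1) → ℝ) : pathCount S C x ≤ (n + 1)! * 4 ^ n := by
  unfold pathCount
  split_ifs
  · calc _ ≤ #{i : Fin (2 * n + 1) → Fin (n + 1) | StrictlyPaired i ∧ colors i = n + 1} :=
          card_le_card fun i hi =>
            have h := (mem_filter.mp hi).2
            mem_filter.mpr ⟨mem_univ i, h.2.1.1, h.2.2.1⟩
      _ ≤ (2 * n + 1).descFactorial (n + 1) := card_filter_strictlyPaired_colors_le (by ring)
      _ = (n + 1)! * (2 * n + 1).choose n := by
          rw [descFactorial_eq_factorial_mul_choose, choose_symm_half]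
      _ ≤ (n + 1)! * 4 ^ n := Nat.mul_le_mul_left _ (choose_middle_le_pow n)
  · exact Nat.zero_le _

theorem setIntegral_unitCube_le {ι : Type*} [Fintype ι] {f : (ι → ℝ) → ℝ} {C : ℝ}
    (hf : ∀ x, ‖f x‖ ≤ C) : ∫ x in Set.univ.pi fun _ : ι => Set.Icc (0 : ℝ) 1, f x ≤ C := by
  have hvol : volume (Set.univ.pi fun _ : ι => Set.Icc (0 : ℝ) 1) = 1 := by
    rw [volume_pi_pi]
    simp [Real.volume_Icc]
  calc _ ≤ ‖∫ x in Set.univ.pi fun _ : ι => Set.Icc (0 : ℝ) 1, f x‖ := Real.le_norm_self _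
    _ ≤ C * volume.real (Set.univ.pi fun _ : ι => Set.Icc (0 : ℝ) 1) :=
        norm_setIntegral_le_of_norm_le_const (hvol.trans_lt ENNReal.one_lt_top) fun x _ => hf x
    _ = C := by rw [measureReal_def, hvol, ENNReal.toReal_one, mul_one]

/-- There is a universal constant `K` such that for every pattern `S`, every
`n ≥ 1` and every configuration `C` of length `2n`, the normalized integral of
the path counting function, i.e. the asymptotic starred moment
`(1/(n+1)!) ∫_{[0,1]^{n+1}} f_{S,C}^{n+1}`, is at most `K^n`; in particular the
asymptotic starred moments grow at most exponentially in `n` (and hence satisfy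
Carleman's condition). -/
theorem pathCount_integral_exponential_bound :
    ∃ K : ℝ, ∀ S : Set (ℝ × ℝ), IsPattern S → ∀ n : ℕ, 1 ≤ n →
      ∀ C : Fin (2 * n) → Bool,
        (1 / (Nat.factorial (n + 1) : ℝ)) *
          (∫ x in Set.univ.pi fun _ : Fin (n + 1) => Set.Icc (0 : ℝ) 1,
            (pathCount S C x : ℝ)) ≤ K ^ n := by
  refine ⟨4, fun S _ n _ C => ?_⟩
  have hbound : ∫ x in Set.univ.pi fun _ : Fin (n + 1) => Set.Icc (0 : ℝ) 1, (pathCount S C x : ℝ)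
      ≤ (n + 1).factorial * 4 ^ n :=
    setIntegral_unitCube_le fun x => by
      rw [Real.norm_natCast]
      exact_mod_cast pathCount_le_factorial_mul_four_pow S C x
  calc _ ≤ 1 / ((n + 1).factorial : ℝ) * ((n + 1).factorial * 4 ^ n) := by gcongr
    _ = 4 ^ n := by field_simp
end
end
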